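/- Let D be a dense countably infinite mesh in I^n and fix an integer k with 1 ≤ k ≤ n. Let A, B : D → I be functions with A ≤ B and L_k^{(A,B)}(DU) ≥ 0 for all DU ∈ R_k(D). Then there exists a function C : D → I such that (i) A ≤ C ≤ B on D, (ii) γ_{k,D}^{(C,B)}(d) = 0 for all d ∈ D, and (iii) L_k^{(C,B)}(DU) ≥ 0 for all DU ∈ R_k(D). -/
import Mathlib


open scoped Classical BigOperators

namespace KIncr

/-- Points of the ambient space `ℝ^n`. -/
abbrev Pt (n : ℕ) := Fin n → ℝ

/-- Membership in the unit cube `I^n = [0,1]^n`. -/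
def inCube {n : ℕ} (x : Pt n) : Prop := ∀ i, x i ∈ Set.Icc (0:ℝ) 1

/-- The unit cube as a set. -/
def cubeSet (n : ℕ) : Set (Pt n) := {x | inCube x}

/-- Vertices of the unit cube `I^n`. -/
def isCubeVertex {n : ℕ} (x : Pt n) : Prop := ∀ i, x i = 0 ∨ x i = 1

/-- A (formal) box, given by its lower-left and upper-right corners. -/
structure Box (n : ℕ) where
  lo : Pt n
  hi : Pt n

/-- `R` is a `k`-box in `I^n`: exactly `k` coordinates are nondegenerate. -/
def Box.IsKBox {n : ℕ} (k : ℕ) (R : Box n) : Prop :=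
  inCube R.lo ∧ inCube R.hi ∧ (∀ i, R.lo i ≤ R.hi i) ∧
    (Finset.univ.filter (fun i => R.lo i < R.hi i)).card = k

/-- `v` is a vertex of the box `R`. -/
def Box.IsVertex {n : ℕ} (R : Box n) (v : Pt n) : Prop :=
  ∀ i, v i = R.lo i ∨ v i = R.hi i

/-- The (finite) set of vertices of a box. -/
noncomputable def Box.vertices {n : ℕ} (R : Box n) : Finset (Pt n) :=
  Finset.image (fun ε : Fin n → Bool => fun i => if ε i then R.hi i else R.lo i)
    Finset.univ

/-- The sign `(-1)^(m-(n-k))` of a vertex `v` of a `k`-box, where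
`m = #{i : v i = lo i}`;  since `m ≥ n - k`, this equals `(-1)^(m+(n-k))`. -/
noncomputable def Box.sign {n : ℕ} (k : ℕ) (R : Box n) (v : Pt n) : ℤ :=
  (-1) ^ ((Finset.univ.filter (fun i => v i = R.lo i)).card + (n - k))

/-- The multiplicity `m_R(u)` of a point `u` with respect to a `k`-box `R`. -/
noncomputable def Box.mult {n : ℕ} (k : ℕ) (R : Box n) (u : Pt n) : ℤ :=
  if R.IsVertex u then R.sign k u else 0

/-- `V_{A,k}(R) = ∑_{v ∈ ver R} sign_R(v) · A(v)`. -/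
noncomputable def Vvol {n : ℕ} (k : ℕ) (A : Pt n → ℝ) (R : Box n) : ℝ :=
  ∑ v ∈ R.vertices, (R.sign k v : ℝ) * A v

/-- A function is `k`-increasing on `D` if `V_{A,k}(R) ≥ 0` for every `k`-box
with all vertices in `D`. -/
def KIncreasingOn {n : ℕ} (k : ℕ) (D : Set (Pt n)) (A : Pt n → ℝ) : Prop :=
  ∀ R : Box n, R.IsKBox k → (∀ v ∈ R.vertices, v ∈ D) → 0 ≤ Vvol k A R

/-- The multiplicity `m_DU(u)` of a point with respect to a formal (multiset)
disjoint union of `k`-boxes. -/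
noncomputable def multDU {n : ℕ} (k : ℕ) (DU : Multiset (Box n)) (u : Pt n) : ℤ :=
  (DU.map (fun R => R.mult k u)).sum

/-- `DU ∈ R_k(D)`: every box of the multiset `DU` is a `k`-box with all its
vertices in `D`. -/
def memRk {n : ℕ} (k : ℕ) (D : Set (Pt n)) (DU : Multiset (Box n)) : Prop :=
  ∀ R ∈ DU, R.IsKBox k ∧ ∀ v ∈ R.vertices, v ∈ D

/-- `L_k^{(A,B)}(DU) = ∑_{m_DU(u)>0} m_DU(u)·B(u) + ∑_{m_DU(u)<0} m_DU(u)·A(u)`. -/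
noncomputable def Lk {n : ℕ} (k : ℕ) (A B : Pt n → ℝ) (DU : Multiset (Box n)) : ℝ :=
  ∑ u ∈ DU.toFinset.biUnion Box.vertices,
    (if 0 < multDU k DU u then (multDU k DU u : ℝ) * B u
     else if multDU k DU u < 0 then (multDU k DU u : ℝ) * A u else 0)

/-- `P⁻_{k,D}^{(A,B)}(x)`, with the Mathlib convention `sInf ∅ = 0`. -/
noncomputable def Pneg {n : ℕ} (k : ℕ) (D : Set (Pt n)) (A B : Pt n → ℝ) (x : Pt n) : ℝ :=
  sInf {r : ℝ | ∃ DU : Multiset (Box n), memRk k D DU ∧ multDU k DU x < 0 ∧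
    r = Lk k A B DU / |(multDU k DU x : ℝ)|}

/-- `P⁺_{k,D}^{(A,B)}(x)`, with the Mathlib convention `sInf ∅ = 0`. -/
noncomputable def Ppos {n : ℕ} (k : ℕ) (D : Set (Pt n)) (A B : Pt n → ℝ) (x : Pt n) : ℝ :=
  sInf {r : ℝ | ∃ DU : Multiset (Box n), memRk k D DU ∧ 0 < multDU k DU x ∧
    r = Lk k A B DU / |(multDU k DU x : ℝ)|}

/-- `γ_{k,D}^{(A,B)}(x) = min {P⁻_{k,D}^{(A,B)}(x), B(x) - A(x)}`. -/
noncomputable def gammaK {n : ℕ} (k : ℕ) (D : Set (Pt n)) (A B : Pt n → ℝ) (x : Pt n) : ℝ :=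
  min (Pneg k D A B x) (B x - A x)

/-- `δ_{k,D}^{(A,B)}(x) = min {P⁺_{k,D}^{(A,B)}(x), B(x) - A(x)}`. -/
noncomputable def deltaK {n : ℕ} (k : ℕ) (D : Set (Pt n)) (A B : Pt n → ℝ) (x : Pt n) : ℝ :=
  min (Ppos k D A B x) (B x - A x)

/-- A dense countably infinite mesh `D = ∏ δᵢ` in `I^n`. -/
def IsMesh {n : ℕ} (D : Set (Pt n)) : Prop :=
  ∃ δ : Fin n → Set ℝ,
    (∀ i, δ i ⊆ Set.Icc (0:ℝ) 1 ∧ (δ i).Countable ∧ (δ i).Infinite ∧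
      Set.Icc (0:ℝ) 1 ⊆ closure (δ i) ∧ (0:ℝ) ∈ δ i ∧ (1:ℝ) ∈ δ i) ∧
    D = {x : Pt n | ∀ i, x i ∈ δ i}

/-- `A` is grounded: it vanishes whenever some coordinate is `0`. -/
def Grounded {n : ℕ} (A : Pt n → ℝ) : Prop :=
  ∀ x : Pt n, inCube x → (∃ i, x i = 0) → A x = 0

/-- `A` is 1-increasing (increasing in each variable). -/
def OneIncreasing {n : ℕ} (A : Pt n → ℝ) : Prop :=
  ∀ x y : Pt n, inCube x → inCube y → (∀ i, x i ≤ y i) → A x ≤ A y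

/-- `A` has uniform marginals. -/
def UniformMarginals {n : ℕ} (A : Pt n → ℝ) : Prop :=
  ∀ i : Fin n, ∀ t ∈ Set.Icc (0:ℝ) 1, A (Function.update (fun _ => (1:ℝ)) i t) = t

/-- `A` is a standardized function. -/
def Standardized {n : ℕ} (A : Pt n → ℝ) : Prop :=
  Grounded A ∧ OneIncreasing A ∧ A (fun _ => (1:ℝ)) = 1

/-- `A` is a semicopula. -/
def Semicopula {n : ℕ} (A : Pt n → ℝ) : Prop :=
  Grounded A ∧ OneIncreasing A ∧ UniformMarginals A

/-- `A` maps the unit cube into `I = [0,1]`. -/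
def MapsToI {n : ℕ} (A : Pt n → ℝ) : Prop :=
  ∀ x : Pt n, inCube x → A x ∈ Set.Icc (0:ℝ) 1

/-- Condition S: all discontinuities of all sections of `A` lie in the
countable set `S`. -/
def CondS {n : ℕ} (A : Pt n → ℝ) (S : Set ℝ) : Prop :=
  ∀ u : Pt n, inCube u → ∀ i : Fin n, ∀ t ∈ Set.Icc (0:ℝ) 1, t ∉ S →
    ContinuousWithinAt (fun s => A (Function.update u i s)) (Set.Icc (0:ℝ) 1) t

/-- A quasi-copula: a semicopula that is 1-Lipschitz w.r.t. the ℓ¹-norm. -/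
def QuasiCopula {n : ℕ} (A : Pt n → ℝ) : Prop :=
  Semicopula A ∧ ∀ x y : Pt n, inCube x → inCube y → |A x - A y| ≤ ∑ i, |x i - y i|

end KIncr

open KIncr
section Aux
open KIncr

variable {n k : ℕ}

private lemma mem_vertices_of_isVertex (R : Box n) {u : Pt n} (h : R.IsVertex u) :
    u ∈ R.vertices := by
  classical
  refine Finset.mem_image.2 ⟨fun i => if u i = R.hi i then true else false,
    Finset.mem_univ _, ?_⟩
  funext i
  by_cases hi : u i = R.hi i
  · simp [hi]
  · rcases h i with h1 | h1
    · have hb : (if u i = R.hi i then true else false) = false := if_neg hi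
      simp only []
      simp [hb, h1.symm]
    · exact absurd h1 hi

private lemma isVertex_of_mult_ne_zero {R : Box n} {u : Pt n} (h : R.mult k u ≠ 0) :
    R.IsVertex u := by
  by_contra hv
  simp [Box.mult, hv] at h

private lemma mem_biUnion_of_multDU_ne_zero {DU : Multiset (Box n)} {x : Pt n}
    (h : multDU k DU x ≠ 0) : x ∈ DU.toFinset.biUnion Box.vertices := by
  classical
  by_contra hx
  apply h
  refine Multiset.sum_eq_zero ?_
  intro z hz
  obtain ⟨R, hR, rfl⟩ := Multiset.mem_map.1 hz
  by_cases hm : R.mult k x = 0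
  · exact hm
  · exact absurd (Finset.mem_biUnion.2 ⟨R, Multiset.mem_toFinset.2 hR,
      mem_vertices_of_isVertex R (isVertex_of_mult_ne_zero hm)⟩) hx

/-- Raising a function at a single point. -/
private noncomputable def raise (A : Pt n → ℝ) (x : Pt n) (ε : ℝ) : Pt n → ℝ :=
  fun u => if u = x then A u + ε else A u

private lemma raise_apply_self (A : Pt n → ℝ) (x : Pt n) (ε : ℝ) :
    raise A x ε x = A x + ε := by simp [raise]

private lemma raise_apply_ne (A : Pt n → ℝ) (x : Pt n) (ε : ℝ) {u : Pt n} (h : u ≠ x) :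
    raise A x ε u = A u := by simp [raise, h]

private lemma Lk_raise_of_nonneg (A B : Pt n → ℝ) (DU : Multiset (Box n)) (x : Pt n) (ε : ℝ)
    (hx : 0 ≤ multDU k DU x) :
    Lk k (raise A x ε) B DU = Lk k A B DU := by
  classical
  unfold Lk
  refine Finset.sum_congr rfl (fun u _ => ?_)
  by_cases hu : u = x
  · subst hu
    rcases lt_or_eq_of_le hx with h1 | h1
    · simp [h1, not_lt.2 h1.le]
    · simp [← h1]
  · rw [raise_apply_ne A x ε hu]

private lemma Lk_raise_of_neg (A B : Pt n → ℝ) (DU : Multiset (Box n)) (x : Pt n) (ε : ℝ)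
    (hx : multDU k DU x < 0) :
    Lk k (raise A x ε) B DU = Lk k A B DU + (multDU k DU x : ℝ) * ε := by
  classical
  have hxV : x ∈ DU.toFinset.biUnion Box.vertices :=
    mem_biUnion_of_multDU_ne_zero hx.ne
  unfold Lk
  rw [← Finset.sum_erase_add _ _ hxV, ← Finset.sum_erase_add _ _ hxV]
  have h1 : ∀ u ∈ (DU.toFinset.biUnion Box.vertices).erase x,
      (if 0 < multDU k DU u then (multDU k DU u : ℝ) * B u
       else if multDU k DU u < 0 then (multDU k DU u : ℝ) * raise A x ε u else 0)
      = (if 0 < multDU k DU u then (multDU k DU u : ℝ) * B u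
       else if multDU k DU u < 0 then (multDU k DU u : ℝ) * A u else 0) := by
    intro u hu
    rw [raise_apply_ne A x ε (Finset.ne_of_mem_erase hu)]
  rw [Finset.sum_congr rfl h1]
  have h2 : ¬ 0 < multDU k DU x := not_lt.2 hx.le
  simp only [h2, if_false, hx, if_true, raise_apply_self]
  ring

private lemma Pneg_set_nonneg {D : Set (Pt n)} {A B : Pt n → ℝ}
    (hL : ∀ DU : Multiset (Box n), memRk k D DU → 0 ≤ Lk k A B DU) (x : Pt n) :
    ∀ r ∈ {r : ℝ | ∃ DU : Multiset (Box n), memRk k D DU ∧ multDU k DU x < 0 ∧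
      r = Lk k A B DU / |(multDU k DU x : ℝ)|}, 0 ≤ r := by
  rintro r ⟨DU, hm, _, rfl⟩
  exact div_nonneg (hL DU hm) (abs_nonneg _)

private lemma Pneg_nonneg {D : Set (Pt n)} {A B : Pt n → ℝ}
    (hL : ∀ DU : Multiset (Box n), memRk k D DU → 0 ≤ Lk k A B DU) (x : Pt n) :
    0 ≤ Pneg k D A B x :=
  Real.sInf_nonneg (Pneg_set_nonneg hL x)

private lemma gammaK_nonneg {D : Set (Pt n)} {A B : Pt n → ℝ}
    (hL : ∀ DU : Multiset (Box n), memRk k D DU → 0 ≤ Lk k A B DU) {x : Pt n}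
    (hABx : A x ≤ B x) : 0 ≤ gammaK k D A B x :=
  le_min (Pneg_nonneg hL x) (by linarith)

private lemma gammaK_le_ratio {D : Set (Pt n)} {A B : Pt n → ℝ}
    (hL : ∀ DU : Multiset (Box n), memRk k D DU → 0 ≤ Lk k A B DU) {x : Pt n}
    {DU : Multiset (Box n)} (hm : memRk k D DU) (hneg : multDU k DU x < 0) :
    gammaK k D A B x ≤ Lk k A B DU / |(multDU k DU x : ℝ)| :=
  le_trans (min_le_left _ _)
    (csInf_le ⟨0, fun r hr => Pneg_set_nonneg hL x r hr⟩ ⟨DU, hm, hneg, rfl⟩)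

private lemma Lk_raise_gamma {D : Set (Pt n)} {A B : Pt n → ℝ}
    (hL : ∀ DU : Multiset (Box n), memRk k D DU → 0 ≤ Lk k A B DU) (x : Pt n) :
    ∀ DU : Multiset (Box n), memRk k D DU →
      0 ≤ Lk k (raise A x (gammaK k D A B x)) B DU := by
  intro DU hm
  rcases lt_or_ge (multDU k DU x) 0 with hneg | hpos
  · rw [Lk_raise_of_neg A B DU x _ hneg]
    set M : ℝ := (multDU k DU x : ℝ) with hM
    have hMneg : M < 0 := by rw [hM]; exact_mod_cast hneg
    have hM0 : M ≠ 0 := hMneg.ne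
    have h1 : gammaK k D A B x ≤ Lk k A B DU / (-M) := by
      have := gammaK_le_ratio hL hm hneg
      rwa [abs_of_neg hMneg] at this
    have h2 : M * (Lk k A B DU / (-M)) ≤ M * gammaK k D A B x :=
      mul_le_mul_of_nonpos_left h1 hMneg.le
    have h3 : M * (Lk k A B DU / (-M)) = -(Lk k A B DU) := by
      rw [div_neg, mul_neg, mul_div_cancel₀ _ hM0]
    linarith [hL DU hm]
  · rw [Lk_raise_of_nonneg A B DU x _ hpos]
    exact hL DU hm

private lemma Lk_anti {A₁ A₂ B : Pt n → ℝ} (h : ∀ u, A₁ u ≤ A₂ u) (DU : Multiset (Box n)) :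
    Lk k A₂ B DU ≤ Lk k A₁ B DU := by
  classical
  refine Finset.sum_le_sum (fun u _ => ?_)
  split_ifs with h1 h2
  · exact le_rfl
  · exact mul_le_mul_of_nonpos_left (h u) (by exact_mod_cast h2.le)
  · exact le_rfl

private lemma Pneg_anti {D : Set (Pt n)} {A₁ A₂ B : Pt n → ℝ} (h12 : ∀ u, A₁ u ≤ A₂ u)
    (hL2 : ∀ DU : Multiset (Box n), memRk k D DU → 0 ≤ Lk k A₂ B DU) (x : Pt n) :
    Pneg k D A₂ B x ≤ Pneg k D A₁ B x := by
  by_cases hne : ∃ DU : Multiset (Box n), memRk k D DU ∧ multDU k DU x < 0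
  · obtain ⟨DU₀, hm₀, hneg₀⟩ := hne
    unfold Pneg
    refine le_csInf ⟨_, ⟨DU₀, hm₀, hneg₀, rfl⟩⟩ ?_
    rintro r ⟨DU, hm, hneg, rfl⟩
    refine le_trans (csInf_le ⟨0, fun r hr => Pneg_set_nonneg hL2 x r hr⟩
      ⟨DU, hm, hneg, rfl⟩) ?_
    exact div_le_div_of_nonneg_right (Lk_anti h12 DU) (abs_nonneg _)
  · have h1 : {r : ℝ | ∃ DU : Multiset (Box n), memRk k D DU ∧ multDU k DU x < 0 ∧
        r = Lk k A₁ B DU / |(multDU k DU x : ℝ)|} = ∅ := by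
      ext r
      simp only [Set.mem_setOf_eq, Set.mem_empty_iff_false, iff_false]
      rintro ⟨DU, hm, hneg, _⟩
      exact hne ⟨DU, hm, hneg⟩
    have h2 : {r : ℝ | ∃ DU : Multiset (Box n), memRk k D DU ∧ multDU k DU x < 0 ∧
        r = Lk k A₂ B DU / |(multDU k DU x : ℝ)|} = ∅ := by
      ext r
      simp only [Set.mem_setOf_eq, Set.mem_empty_iff_false, iff_false]
      rintro ⟨DU, hm, hneg, _⟩
      exact hne ⟨DU, hm, hneg⟩
    unfold Pneg
    rw [h1, h2]

private lemma gammaK_anti {D : Set (Pt n)} {A₁ A₂ B : Pt n → ℝ} (h12 : ∀ u, A₁ u ≤ A₂ u)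
    (hL2 : ∀ DU : Multiset (Box n), memRk k D DU → 0 ≤ Lk k A₂ B DU) (x : Pt n) :
    gammaK k D A₂ B x ≤ gammaK k D A₁ B x :=
  min_le_min (Pneg_anti h12 hL2 x) (by linarith [h12 x])

end Aux

/-- Proposition 4.2: existence of `C` on the mesh obtained by
raising `A`. -/
theorem stmt6 (n k : ℕ) (hn : 1 ≤ n) (hk1 : 1 ≤ k) (hkn : k ≤ n)
    (D : Set (Pt n)) (hD : IsMesh D) (A B : Pt n → ℝ)
    (hAI : ∀ u ∈ D, A u ∈ Set.Icc (0:ℝ) 1) (hBI : ∀ u ∈ D, B u ∈ Set.Icc (0:ℝ) 1)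
    (hAB : ∀ u ∈ D, A u ≤ B u)
    (hL : ∀ DU : Multiset (Box n), memRk k D DU → 0 ≤ Lk k A B DU) :
    ∃ C : Pt n → ℝ,
      (∀ d ∈ D, A d ≤ C d ∧ C d ≤ B d) ∧
      (∀ d ∈ D, gammaK k D C B d = 0) ∧
      (∀ DU : Multiset (Box n), memRk k D DU → 0 ≤ Lk k C B DU) := by
  classical
  obtain ⟨δ, hδ, hDeq⟩ := hD
  have hDc : D.Countable := by
    rw [hDeq]
    exact Set.countable_pi (fun i => (hδ i).2.1)
  have hDne : D.Nonempty := by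
    refine ⟨fun _ => 0, ?_⟩
    rw [hDeq]
    intro i
    exact (hδ i).2.2.2.2.1
  obtain ⟨f, hf⟩ := hDc.exists_eq_range hDne
  set e : ℕ → Pt n := fun m => f (Nat.unpair m).1 with he
  have heD : ∀ m, e m ∈ D := fun m => by rw [hf]; exact Set.mem_range_self _
  set F : ℕ → Pt n → ℝ := fun m => Nat.rec (motive := fun _ => Pt n → ℝ) A
    (fun m Am => raise Am (e m) (gammaK k D Am B (e m))) m with hF
  have hF0 : F 0 = A := rfl
  have hFs : ∀ m, F (m+1) = raise (F m) (e m) (gammaK k D (F m) B (e m)) := fun m => rfl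
  -- invariants
  have hInv : ∀ m, (∀ DU : Multiset (Box n), memRk k D DU → 0 ≤ Lk k (F m) B DU) ∧
      (∀ u ∈ D, F m u ≤ B u) := by
    intro m
    induction m with
    | zero => exact ⟨hL, hAB⟩
    | succ m ih =>
      refine ⟨?_, ?_⟩
      · intro DU hm
        rw [hFs m]
        exact Lk_raise_gamma ih.1 (e m) DU hm
      · intro u hu
        rw [hFs m]
        by_cases huu : u = e m
        · rw [huu, raise_apply_self]
          have h1 : gammaK k D (F m) B (e m) ≤ B (e m) - F m (e m) := min_le_right _ _
          have h2 := ih.2 (e m) (heD m)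
          linarith
        · rw [raise_apply_ne _ _ _ huu]
          exact ih.2 u hu
  have hmono1 : ∀ m u, F m u ≤ F (m+1) u := by
    intro m u
    rw [hFs m]
    by_cases huu : u = e m
    · rw [huu, raise_apply_self]
      have := gammaK_nonneg (hInv m).1 ((hInv m).2 (e m) (heD m))
      linarith
    · rw [raise_apply_ne _ _ _ huu]
  have hmono : ∀ u, Monotone (fun m => F m u) :=
    fun u => monotone_nat_of_le_succ (fun m => hmono1 m u)
  have hFout : ∀ m u, u ∉ D → F m u = A u := by
    intro m
    induction m with
    | zero => intro u _; rfl
    | succ m ih =>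
      intro u hu
      rw [hFs m, raise_apply_ne _ _ _ (fun h => hu (by rw [h]; exact heD m)), ih u hu]
  have hbdd : ∀ u, BddAbove (Set.range fun m => F m u) := by
    intro u
    refine ⟨max (A u) (B u), ?_⟩
    rintro r ⟨m, rfl⟩
    by_cases hu : u ∈ D
    · exact le_max_of_le_right ((hInv m).2 u hu)
    · exact le_max_of_le_left (le_of_eq (hFout m u hu))
  set C : Pt n → ℝ := fun u => ⨆ m, F m u with hC
  have hFC : ∀ m u, F m u ≤ C u := fun m u => le_ciSup (hbdd u) m
  have hCB : ∀ u ∈ D, C u ≤ B u := fun u hu => ciSup_le (fun m => (hInv m).2 u hu)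
  have hAC : ∀ u, A u ≤ C u := fun u => hFC 0 u
  have hTend : ∀ u, Filter.Tendsto (fun m => F m u) Filter.atTop (nhds (C u)) :=
    fun u => tendsto_atTop_ciSup (hmono u) (hbdd u)
  have hLC : ∀ DU : Multiset (Box n), memRk k D DU → 0 ≤ Lk k C B DU := by
    intro DU hm
    have hT : Filter.Tendsto (fun m => Lk k (F m) B DU) Filter.atTop
        (nhds (Lk k C B DU)) := by
      unfold Lk
      refine tendsto_finset_sum _ (fun u _ => ?_)
      by_cases h1 : 0 < multDU k DU u
      · simp only [h1, if_true]
        exact tendsto_const_nhds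
      · by_cases h2 : multDU k DU u < 0
        · simp only [h1, if_false, h2, if_true]
          exact Filter.Tendsto.const_mul _ (hTend u)
        · simp only [h1, if_false, h2]
          exact tendsto_const_nhds
    exact ge_of_tendsto' hT (fun m => (hInv m).1 DU hm)
  refine ⟨C, fun d hd => ⟨hAC d, hCB d hd⟩, ?_, hLC⟩
  intro d hd
  have hge : 0 ≤ gammaK k D C B d := gammaK_nonneg hLC (hCB d hd)
  refine le_antisymm ?_ hge
  by_contra hpos
  push_neg at hpos
  set c := gammaK k D C B d with hc
  have hcm : ∀ m, c ≤ gammaK k D (F m) B d :=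
    fun m => gammaK_anti (fun u => hFC m u) hLC d
  obtain ⟨i, hi⟩ : ∃ i, f i = d := by
    have : d ∈ Set.range f := hf ▸ hd
    exact this
  have hkey : ∀ m : ℕ,
      A d + c * (((Finset.range m).filter (fun j => e j = d)).card : ℝ) ≤ F m d := by
    intro m
    induction m with
    | zero =>
      simp only [Finset.range_zero, Finset.filter_empty, Finset.card_empty,
        Nat.cast_zero, mul_zero, add_zero]
      exact le_rfl
    | succ m ih =>
      rw [Finset.range_add_one, Finset.filter_insert]
      by_cases hm : e m = d
      · rw [if_pos hm, Finset.card_insert_of_notMem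
          (fun hmem => Finset.notMem_range_self (Finset.mem_filter.1 hmem).1)]
        push_cast
        have hstep : F (m+1) d = F m d + gammaK k D (F m) B d := by
          rw [hFs m, ← hm, raise_apply_self]
        have h2 := hcm m
        rw [hstep]
        linarith
      · rw [if_neg hm]
        have hstep : F (m+1) d = F m d := by
          rw [hFs m, raise_apply_ne _ _ _ (fun h => hm h.symm)]
        rw [hstep]
        exact ih
  obtain ⟨N, hN⟩ := exists_nat_gt ((B d - A d) / c)
  have hNc : B d - A d < N * c := by rwa [div_lt_iff₀ hpos] at hN
  set m0 := (Finset.range N).sup (fun j => Nat.pair i j) + 1 with hm0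
  have hsub : (Finset.range N).image (fun j => Nat.pair i j) ⊆
      (Finset.range m0).filter (fun j => e j = d) := by
    intro x hx
    obtain ⟨j, hj, rfl⟩ := Finset.mem_image.1 hx
    refine Finset.mem_filter.2 ⟨Finset.mem_range.2 (Nat.lt_succ_of_le (Finset.le_sup hj)), ?_⟩
    show f (Nat.unpair (Nat.pair i j)).1 = d
    rw [Nat.unpair_pair]
    exact hi
  have hcard : (N : ℝ) ≤ (((Finset.range m0).filter (fun j => e j = d)).card : ℝ) := by
    have h1 : ((Finset.range N).image (fun j => Nat.pair i j)).card = N := by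
      rw [Finset.card_image_of_injective _ (fun a b hab => ?_), Finset.card_range]
      have h2 := congrArg Nat.unpair hab
      simpa [Nat.unpair_pair] using h2
    have h3 := Finset.card_le_card hsub
    rw [h1] at h3
    exact_mod_cast h3
  have h4 := hkey m0
  have hFB : F m0 d ≤ B d := (hInv m0).2 d hd
  have h5 : c * (N : ℝ) ≤ c * (((Finset.range m0).filter (fun j => e j = d)).card : ℝ) :=
    mul_le_mul_of_nonneg_left hcard hpos.le
  have h6 : (N : ℝ) * c = c * N := mul_comm _ _
  linarith
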